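/- Let (X, 𝔸, F_c) be a C*-algebra-valued controlled F_c-metric type space, T : X → X, and suppose there exist P, Q, R ∈ 𝔸 with ‖P‖² + ‖Q‖² + ‖R‖² < 1 such that F_c(Tϖ,Tϖ,Tν̄) ⪯ P* F_c(ϖ,ϖ,ν̄) P + Q* F_c(ϖ,ϖ,Tϖ) Q + R* F_c(ν̄,ν̄,Tν̄) R for all ϖ,ν̄ ∈ X. Then for the Picard sequence ϖ_{n+1} = Tϖ_n starting at any ϖ₀ ∈ X, one has ‖F_c(ϖ_n,ϖ_n,ϖ_{n+1})‖ ≤ k ‖F_c(ϖ_{n−1},ϖ_{n−1},ϖ_n)‖ for all n ≥ 1, where k = (‖P‖² + ‖Q‖²)/(1 − ‖R‖²) < 1; consequently ‖F_c(ϖ_n,ϖ_n,ϖ_{n+1})‖ ≤ kⁿ ‖F_c(ϖ₀,ϖ₀,ϖ₁)‖. -/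

import Mathlib

/-! Applying the contraction at `(ϖₙ₋₁, ϖₙ)`, the `R`-term on the right contains
`F_c(ϖₙ, ϖₙ, ϖₙ₊₁)` itself. Since all values of `F_c` are positive, the order bound passes to
norms, and `‖W* a W‖ ≤ ‖W‖² ‖a‖` lets that term be absorbed into the left-hand side, leaving the
ratio `k = (‖P‖² + ‖Q‖²) / (1 - ‖R‖²)`; iterating gives the geometric bound. -/

open Filter Topology

/-- A C*-algebra-valued controlled F_c-metric type space. -/
structure CFcSpace (X : Type*) (A : Type*) [CStarAlgebra A] [PartialOrder A]
    [StarOrderedRing A] where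
  Fc : X → X → X → A
  C : X → X → X → A
  C_central : ∀ x y z w, C x y z * w = w * C x y z
  one_le_C : ∀ x y z, (1 : A) ≤ C x y z
  eq_iff : ∀ x y z : X, (x = y ∧ y = z) ↔
    (Fc x x x = Fc y y y ∧ Fc y y y = Fc z z z ∧ Fc z z z = Fc x y z)
  Fc_nonneg : ∀ x : X, (0 : A) ≤ Fc x x x
  Fc_mono1 : ∀ x y : X, Fc x x x ≤ Fc x x y
  Fc_mono2 : ∀ x y z : X, Fc x x y ≤ Fc x y z
  controlled : ∀ x y z a : X,
    Fc x y z ≤ C x x a * Fc x x a + C y y a * Fc y y a + C z z a * Fc z z a - Fc a a a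

namespace CFcSpace

variable {X A : Type*} [CStarAlgebra A] [PartialOrder A] [StarOrderedRing A]

/-- Symmetry of the space. -/
def IsSymmetric (S : CFcSpace X A) : Prop := ∀ x y : X, S.Fc x x y = S.Fc y y x

/-- Convergence of a sequence to a point. -/
def Converges (S : CFcSpace X A) (s : ℕ → X) (x : X) : Prop :=
  Tendsto (fun n => ‖S.Fc (s n) (s n) x‖) atTop (𝓝 0)

/-- Cauchy sequence. -/
def IsCauchySeq (S : CFcSpace X A) (s : ℕ → X) : Prop :=
  Tendsto (fun p : ℕ × ℕ => ‖S.Fc (s p.1) (s p.1) (s p.2)‖) atTop (𝓝 0)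

/-- Completeness of the space. -/
def IsComplete' (S : CFcSpace X A) : Prop :=
  ∀ s : ℕ → X, S.IsCauchySeq s → ∃ x : X, S.Converges s x

end CFcSpace

theorem norm_star_mul_mul_le {A : Type*} [NonUnitalNormedRing A] [StarRing A] [NormedStarGroup A]
    (W x : A) : ‖star W * x * W‖ ≤ ‖W‖ ^ 2 * ‖x‖ :=
  calc ‖star W * x * W‖ ≤ ‖star W‖ * ‖x‖ * ‖W‖ :=
        (norm_mul_le _ _).trans (by gcongr; exact norm_mul_le _ _)
    _ = ‖W‖ ^ 2 * ‖x‖ := by rw [norm_star]; ring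

namespace CFcSpace

variable {X A : Type*} [CStarAlgebra A] [PartialOrder A] [StarOrderedRing A]

theorem Fc_self_self_nonneg (S : CFcSpace X A) (x y : X) : 0 ≤ S.Fc x x y :=
  (S.Fc_nonneg x).trans (S.Fc_mono1 x y)

theorem norm_Fc_apply_le (S : CFcSpace X A) {T : X → X} {P Q R : A} (hR : ‖R‖ ^ 2 < 1)
    (hcontr : ∀ x y : X, S.Fc (T x) (T x) (T y) ≤
      star P * S.Fc x x y * P + star Q * S.Fc x x (T x) * Q + star R * S.Fc y y (T y) * R)
    (x : X) :
    ‖S.Fc (T x) (T x) (T (T x))‖ ≤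
      (‖P‖ ^ 2 + ‖Q‖ ^ 2) / (1 - ‖R‖ ^ 2) * ‖S.Fc x x (T x)‖ := by
  set a := S.Fc x x (T x)
  set b := S.Fc (T x) (T x) (T (T x))
  have hb : ‖b‖ ≤ ‖star P * a * P + star Q * a * Q + star R * b * R‖ :=
    CStarAlgebra.norm_le_norm_of_nonneg_of_le (S.Fc_self_self_nonneg _ _) (hcontr x (T x))
  have hsum : ‖star P * a * P + star Q * a * Q + star R * b * R‖ ≤
      ‖P‖ ^ 2 * ‖a‖ + ‖Q‖ ^ 2 * ‖a‖ + ‖R‖ ^ 2 * ‖b‖ :=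
    (norm_add₃_le).trans (by gcongr <;> exact norm_star_mul_mul_le _ _)
  rw [div_mul_eq_mul_div, le_div_iff₀ (by linarith)]
  linarith

end CFcSpace

/-- The Picard iterates of a contractive map satisfy a geometric decay of F_c-norms. -/
theorem picard_norm_decay {X A : Type*} [CStarAlgebra A] [PartialOrder A] [StarOrderedRing A]
    (S : CFcSpace X A) (T : X → X)
    (P Q R : A) (hPQR : ‖P‖ ^ 2 + ‖Q‖ ^ 2 + ‖R‖ ^ 2 < 1)
    (hcontr : ∀ x y : X, S.Fc (T x) (T x) (T y) ≤
      star P * S.Fc x x y * P + star Q * S.Fc x x (T x) * Q + star R * S.Fc y y (T y) * R)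
    (x0 : X) :
    (∀ n : ℕ, 1 ≤ n →
      ‖S.Fc (T^[n] x0) (T^[n] x0) (T^[n + 1] x0)‖ ≤
        (‖P‖ ^ 2 + ‖Q‖ ^ 2) / (1 - ‖R‖ ^ 2) *
          ‖S.Fc (T^[n - 1] x0) (T^[n - 1] x0) (T^[n] x0)‖) ∧
    (‖P‖ ^ 2 + ‖Q‖ ^ 2) / (1 - ‖R‖ ^ 2) < 1 ∧
    (∀ n : ℕ, ‖S.Fc (T^[n] x0) (T^[n] x0) (T^[n + 1] x0)‖ ≤
      ((‖P‖ ^ 2 + ‖Q‖ ^ 2) / (1 - ‖R‖ ^ 2)) ^ n * ‖S.Fc x0 x0 (T x0)‖) := by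
  set k := (‖P‖ ^ 2 + ‖Q‖ ^ 2) / (1 - ‖R‖ ^ 2)
  have hR : ‖R‖ ^ 2 < 1 := by linarith [sq_nonneg ‖P‖, sq_nonneg ‖Q‖]
  have hk0 : 0 ≤ k := div_nonneg (by positivity) (by linarith)
  have hk1 : k < 1 := (div_lt_one (by linarith)).2 (by linarith)
  have step : ∀ n : ℕ, ‖S.Fc (T^[n + 1] x0) (T^[n + 1] x0) (T^[n + 1 + 1] x0)‖ ≤
      k * ‖S.Fc (T^[n] x0) (T^[n] x0) (T^[n + 1] x0)‖ := fun n => by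
    simpa only [Function.iterate_succ_apply'] using S.norm_Fc_apply_le hR hcontr (T^[n] x0)
  refine ⟨fun n hn => ?_, hk1, fun n =>
    le_geom (u := fun n => ‖S.Fc (T^[n] x0) (T^[n] x0) (T^[n + 1] x0)‖) hk0 n fun m _ => step m⟩
  obtain ⟨m, rfl⟩ := Nat.exists_eq_add_of_le' hn
  exact step m
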